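/- Let D be a Dedekind domain with field of fractions F, where F is a totally real number field and L is a CM field with maximal totally real subfield F. Then any D-subalgebra R of the integral closure of D in L satisfying R ⊗ ℚ = L is a Gorenstein ring. -/

import Mathlib

/-- A number field (or any `ℚ`-algebra) is *totally real* if every complex embedding
takes values in the reals. -/
def IsTotallyRealField (F : Type*) [Field F] : Prop :=
  ∀ (φ : F →+* ℂ) (x : F), (starRingEnd ℂ) (φ x) = φ x

/-- A field is *totally imaginary* if no complex embedding takes values in the reals. -/
def IsTotallyImaginaryField (K : Type*) [Field K] : Prop :=
  ∀ φ : K →+* ℂ, ∃ x : K, (starRingEnd ℂ) (φ x) ≠ φ x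

/-- An `R`-algebra `K` (thought of as the total quotient ring of the one-dimensional
ring `R`) makes `R` a *Gorenstein* ring if every nonzero finitely generated fractional
`R`-ideal whose multiplicator ring is `R` itself is invertible.  (For the orders
appearing in this paper this is the classical characterization, due to Bass, of
Gorenstein one-dimensional rings.) -/
def IsGorensteinOrder (R K : Type*) [CommRing R] [CommRing K] [Algebra R K] : Prop :=
  ∀ I : Submodule R K, I.FG → I ≠ ⊥ →
    (∀ x : K, (∀ y ∈ I, x * y ∈ I) ↔ x ∈ (algebraMap R K).range) →
    ∃ J : Submodule R K, I * J = 1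

/-!
Let `σ` be the nontrivial automorphism of `L/F`, so that `x σ(x) = N(x)`, and let `I` be a fractional
`R`-ideal with multiplier ring `R`. The `D`-module `𝔫` spanned by the norms of the elements of `I` is
a fractional ideal of the Dedekind domain `D`; let `W` be its inverse. For `w ∈ W` the quadratic
form `Q(v) = w v σ(v)` is `D`-valued on `I`, and this forces `x σ(y) w z ∈ I` for all `x, y, z ∈ I`.
That membership is local on `D`, and over the principal ideal domain `D_p` the lattice `I_p` has a
basis of at most two elements; on basis vectors it follows from the polarization identity
`u σ(v) w u = T(u, v) u - Q(u) v`, `T` being the polar form of `Q`. Hence `σ(I) W` multiplies `I`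
into `R`, i.e. lies in `R : I = 1 / I`, while `1 ∈ 𝔫 W ⊆ I σ(I) W`, so `I (R : I) = R`.
-/

open Module Submodule

theorem exists_algEquiv_mul_apply_eq_norm (F L : Type*) [Field F] [Field L] [Algebra F L]
    [IsGalois F L] (h2 : finrank F L = 2) :
    ∃ σ : Gal(L/F), ∀ x, x * σ x = algebraMap F L (Algebra.norm F x) := by
  classical
  have : FiniteDimensional F L := .of_finrank_eq_succ h2
  have hcard : Fintype.card Gal(L/F) = 2 := by
    rw [← Nat.card_eq_fintype_card, IsGalois.card_aut_eq_finrank, h2]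
  obtain ⟨σ, hσ⟩ := Fintype.exists_ne_of_one_lt_card (hcard ▸ one_lt_two) 1
  have huniv : (Finset.univ : Finset Gal(L/F)) = {1, σ} :=
    (Finset.eq_of_subset_of_card_le (Finset.subset_univ _)
      (by rw [Finset.card_univ, hcard, Finset.card_pair hσ.symm])).symm
  refine ⟨σ, fun x => ?_⟩
  rw [Algebra.norm_eq_prod_automorphisms, huniv, Finset.prod_pair hσ.symm, AlgEquiv.one_apply]

section NormForm

variable {A L : Type*} [CommRing A] [CommRing L] [Algebra A L] {σ : L →ₗ[A] L} {μ : L}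

theorem Submodule.mul_mem_of_mem_range_algebraMap {M : Submodule A L} {x y : L}
    (hx : x ∈ Set.range (algebraMap A L)) (hy : y ∈ M) : x * y ∈ M := by
  obtain ⟨a, rfl⟩ := hx
  simpa only [Algebra.smul_def] using M.smul_mem a hy

theorem mul_apply_mul_mul_self_mem {M : Submodule A L}
    (hN : ∀ v ∈ M, μ * (v * σ v) ∈ Set.range (algebraMap A L)) {u v : L} (hu : u ∈ M)
    (hv : v ∈ M) : u * σ v * μ * u ∈ M := by
  have hT : μ * ((u + v) * σ (u + v)) - μ * (u * σ u) - μ * (v * σ v) ∈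
      Set.range (algebraMap A L) := by
    obtain ⟨a, ha⟩ := hN _ (M.add_mem hu hv)
    obtain ⟨b, hb⟩ := hN u hu
    obtain ⟨c, hc⟩ := hN v hv
    exact ⟨a - b - c, by rw [map_sub, map_sub, ha, hb, hc]⟩
  have : u * σ v * μ * u =
      (μ * ((u + v) * σ (u + v)) - μ * (u * σ u) - μ * (v * σ v)) * u - μ * (u * σ u) * v := by
    rw [map_add]; ring
  exact this ▸ M.sub_mem (mul_mem_of_mem_range_algebraMap hT hu)
    (mul_mem_of_mem_range_algebraMap (hN u hu) hv)

theorem mul_apply_mul_mul_mem_span {S : Set L} (hS : S.encard ≤ 2)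
    (hN : ∀ v ∈ span A S, μ * (v * σ v) ∈ Set.range (algebraMap A L))
    {x y z : L} (hx : x ∈ span A S) (hy : y ∈ span A S) (hz : z ∈ span A S) :
    x * σ y * μ * z ∈ span A S := by
  suffices h : span A S * (span A S).map σ * span A {μ} * span A S ≤ span A S from
    h (mul_mem_mul (mul_mem_mul (mul_mem_mul hx (mem_map_of_mem hy))
      (mem_span_singleton_self μ)) hz)
  rw [map_span, span_mul_span, span_mul_span, span_mul_span, span_le]
  rintro _ ⟨_, ⟨_, ⟨u, hu, _, ⟨v, hv, rfl⟩, rfl⟩, m, hm, rfl⟩, w, hw, rfl⟩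
  rw [Set.mem_singleton_iff.1 hm]
  beta_reduce
  have mem {t : L} (ht : t ∈ S) : t ∈ span A S := subset_span ht
  by_cases huv : u = v
  · subst huv
    rw [show u * σ u * μ * w = μ * (u * σ u) * w by ring]
    exact mul_mem_of_mem_range_algebraMap (hN u (mem hu)) (mem hw)
  by_cases hvw : v = w
  · subst hvw
    rw [show u * σ v * μ * v = μ * (v * σ v) * u by ring]
    exact mul_mem_of_mem_range_algebraMap (hN v (mem hv)) (mem hu)
  obtain rfl : u = w := by
    by_contra huw
    have h3 := (Set.encard_le_encard (s := {u, v, w})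
      (by simp only [Set.insert_subset_iff, Set.singleton_subset_iff, hu, hv, hw, and_self])).trans hS
    rw [Set.encard_eq_three.2 ⟨u, v, w, huv, huw, hvw, rfl⟩] at h3
    exact absurd h3 (by decide)
  exact mul_apply_mul_mul_self_mem hN (mem hu) (mem hv)

end NormForm

theorem Submodule.FG.exists_encard_le_finrank_and_span_eq {A F L : Type*} [CommRing A]
    [IsDomain A] [IsPrincipalIdealRing A] [Field F] [Algebra A F] [IsFractionRing A F]
    [AddCommGroup L] [Module F L] [Module A L] [IsScalarTower A F L] [FiniteDimensional F L]
    {M : Submodule A L} (hM : M.FG) : ∃ S : Set L, S.encard ≤ finrank F L ∧ span A S = M := by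
  have : IsTorsionFree A L := .trans F
  have : Module.Finite A M := Module.Finite.iff_fg.2 hM
  obtain ⟨n, b⟩ := Module.basisOfFiniteTypeTorsionFree' (R := A) (M := M)
  have hli : LinearIndependent F (fun i => (b i : L)) :=
    (b.linearIndependent.map' M.subtype M.ker_subtype).localization (Rₛ := F) (nonZeroDivisors A)
  refine ⟨Set.range fun i => (b i : L), ?_, ?_⟩
  · calc (Set.range fun i => (b i : L)).encard ≤ n := by
          simpa using Set.encard_image_le (fun i => (b i : L)) Set.univ
      _ ≤ finrank F L := by simpa using hli.fintype_card_le_finrank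
  · change span A (Set.range (M.subtype ∘ b)) = M
    rw [Set.range_comp, span_image, b.span_eq, map_subtype_top]

section Localization

variable {D A L : Type*} [CommRing D] [CommRing A] [Algebra D A] [CommRing L] [Algebra D L]
  [Algebra A L] [IsScalarTower D A L] {S : Submonoid D} [IsLocalization S A]

theorem mem_range_algebraMap_of_smul_mem {x : L} {s : D} (hs : s ∈ S)
    (h : s • x ∈ Set.range (algebraMap D L)) : x ∈ Set.range (algebraMap A L) := by
  obtain ⟨d, hd⟩ := h
  refine ⟨IsLocalization.mk' A d ⟨s, hs⟩, ?_⟩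
  rw [← (IsLocalization.map_units A (⟨s, hs⟩ : S)).smul_left_cancel]
  simp only [algebraMap_smul]
  rw [← hd, Algebra.smul_def, IsScalarTower.algebraMap_apply D A L, ← map_mul, mul_comm,
    IsLocalization.mk'_spec, ← IsScalarTower.algebraMap_apply]

variable (A S) in
theorem Submodule.exists_smul_mem_of_mem_localized' {J : Submodule D L} {v : L}
    [IsLocalizedModule S (LinearMap.id : L →ₗ[D] L)] (hv : v ∈ J.localized' A S LinearMap.id) :
    ∃ s ∈ S, s • v ∈ J := by
  obtain ⟨m, hm, s, rfl⟩ := hv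
  exact ⟨s, s.2, by rwa [← Submonoid.smul_def, IsLocalizedModule.mk'_cancel']⟩

end Localization

theorem Submodule.mem_of_forall_isMaximal_exists_smul_mem {R M : Type*} [CommRing R]
    [AddCommGroup M] [Module R M] {N : Submodule R M} {x : M}
    (h : ∀ p : Ideal R, p.IsMaximal → ∃ s ∉ p, s • x ∈ N) : x ∈ N := by
  by_contra hx
  obtain ⟨p, hp, hle⟩ := Ideal.exists_le_maximal (N.colon {x})
    (by rwa [Ne, Ideal.eq_top_iff_one, mem_colon_singleton, one_smul])
  obtain ⟨s, hs, hsx⟩ := h p hp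
  exact hs (hle (mem_colon_singleton.2 hsx))

section Dedekind

open nonZeroDivisors

variable {D F L : Type*} [CommRing D] [Field F] [Algebra D F] [IsFractionRing D F]

theorem exists_smul_mul_apply_mul_mul_mem [IsDedekindDomain D] [CommRing L] [Algebra F L]
    [Algebra D L] [IsScalarTower D F L] [FiniteDimensional F L] (h2 : finrank F L ≤ 2)
    (σ : L →ₗ[F] L) (μ : L) {J : Submodule D L} (hJ : J.FG)
    (hN : ∀ v ∈ J, μ * (v * σ v) ∈ Set.range (algebraMap D L)) (p : Ideal D) [p.IsPrime]
    {x y z : L} (hx : x ∈ J) (hy : y ∈ J) (hz : z ∈ J) :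
    ∃ s ∉ p, s • (x * σ y * μ * z) ∈ J := by
  let A := Localization.subalgebra.ofField F p.primeCompl p.primeCompl_le_nonZeroDivisors
  have : IsLocalRing A := IsLocalization.AtPrime.isLocalRing A p
  have : IsDedekindDomain A := IsLocalization.isDedekindDomain D p.primeCompl_le_nonZeroDivisors A
  have := isLocalizedModule_id p.primeCompl L A
  set M := J.localized' A p.primeCompl (LinearMap.id : L →ₗ[D] L)
  have hJM {v : L} (hv : v ∈ J) : v ∈ M := ⟨_, hv, 1, IsLocalizedModule.mk'_one _ _ _⟩
  have hNM : ∀ v ∈ M, μ * (v * σ v) ∈ Set.range (algebraMap A L) := by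
    intro v hv
    obtain ⟨s, hs, hsv⟩ := exists_smul_mem_of_mem_localized' A p.primeCompl hv
    refine mem_range_algebraMap_of_smul_mem (mul_mem hs hs) ?_
    have : (s * s) • (μ * (v * σ v)) = μ * (s • v * σ (s • v)) := by
      rw [σ.map_smul_of_tower, smul_mul_smul_comm, mul_smul_comm]
    exact this ▸ hN _ hsv
  obtain ⟨S, hS, hSM⟩ : ∃ S : Set L, S.encard ≤ finrank F L ∧ span A S = M :=
    (J.localized'_fg A p.primeCompl LinearMap.id hJ).exists_encard_le_finrank_and_span_eq
  rw [← hSM] at hJM hNM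
  have key := mul_apply_mul_mul_mem_span (σ := σ.restrictScalars A)
    (hS.trans (by exact_mod_cast h2)) hNM (hJM hx) (hJM hy) (hJM hz)
  rw [hSM] at key
  exact exists_smul_mem_of_mem_localized' A p.primeCompl key

variable [Field L] [Algebra F L] [Algebra D L] [IsScalarTower D F L] [FiniteDimensional F L]

theorem isFractional_span_norm_image [IsDomain D] [IsIntegrallyClosed D] {J : Submodule D L}
    (hJ : J.FG) : IsFractional D⁰ (span D (Algebra.norm F '' (J : Set L))) := by
  obtain ⟨T, rfl⟩ := hJ
  obtain ⟨q, hq, hqT⟩ := exists_integral_multiples D F T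
  have hqJ : span D T ≤
      (Subalgebra.toSubmodule (integralClosure D L)).comap (LinearMap.lsmul D L q) :=
    span_le.2 hqT
  refine FractionalIdeal.isFractional_span_iff.2
    ⟨q ^ finrank F L, pow_mem (mem_nonZeroDivisors_of_ne_zero hq) _, ?_⟩
  rintro _ ⟨v, hv, rfl⟩
  have hint : IsIntegral D (Algebra.norm F (q • v)) := Algebra.isIntegral_norm F (hqJ hv)
  rw [Algebra.smul_def, IsScalarTower.algebraMap_apply D F L, map_mul, Algebra.norm_algebraMap,
    ← map_pow, ← Algebra.smul_def] at hint
  exact IsIntegrallyClosed.isIntegral_iff.1 hint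

theorem exists_span_norm_image_mul_eq_one [IsDedekindDomain D] {J : Submodule D L} (hJ : J.FG)
    (hJ0 : J ≠ ⊥) : ∃ W : Submodule D F, span D (Algebra.norm F '' (J : Set L)) * W = 1 := by
  let 𝔫 : FractionalIdeal D⁰ F := ⟨_, isFractional_span_norm_image hJ⟩
  have h𝔫 : 𝔫 ≠ 0 := by
    obtain ⟨v, hv, hv0⟩ := J.ne_bot_iff.1 hJ0
    intro h
    have hmem : Algebra.norm F v ∈ 𝔫 := subset_span ⟨v, hv, rfl⟩
    rw [h, FractionalIdeal.mem_zero_iff] at hmem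
    exact (Algebra.norm_ne_zero_iff (R := F)).2 hv0 hmem
  refine ⟨(𝔫⁻¹ : FractionalIdeal D⁰ F), ?_⟩
  rw [← FractionalIdeal.coe_one, ← mul_inv_cancel₀ h𝔫, FractionalIdeal.coe_mul]
  rfl

theorem Subalgebra.finite_of_le_integralClosure [IsDedekindDomain D] [Algebra.IsSeparable F L]
    {R : Subalgebra D L} (hR : R ≤ integralClosure D L) : Module.Finite D R := by
  have : IsNoetherian D (Subalgebra.toSubmodule (integralClosure D L)) :=
    IsIntegralClosure.isNoetherian D F L (integralClosure D L)
  have : IsNoetherian D (Subalgebra.toSubmodule R) :=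
    isNoetherian_of_le (Subalgebra.toSubmodule.monotone hR)
  exact Module.IsNoetherian.finite D (Subalgebra.toSubmodule R)

theorem mul_one_div_eq_one_of_finrank_le_two [IsDedekindDomain D] (h2 : finrank F L ≤ 2)
    (σ : L →ₗ[F] L) (hσ : ∀ x, x * σ x = algebraMap F L (Algebra.norm F x)) {R : Subalgebra D L}
    {I : Submodule R L} (hI : (I.restrictScalars D).FG) (hI0 : I ≠ ⊥)
    (hImul : ∀ x : L, (∀ y ∈ I, x * y ∈ I) → x ∈ (algebraMap R L).range) :
    I * (1 / I) = 1 := by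
  obtain ⟨W, hW⟩ := exists_span_norm_image_mul_eq_one (F := F) hI
    (by rwa [Ne, restrictScalars_eq_bot_iff])
  have hN : ∀ w ∈ W, ∀ v ∈ I.restrictScalars D,
      algebraMap F L w * (v * σ v) ∈ Set.range (algebraMap D L) := by
    intro w hw v hv
    obtain ⟨d, hd⟩ := mem_one.1 (hW ▸ mul_mem_mul (subset_span (Set.mem_image_of_mem _ hv)) hw)
    exact ⟨d, by rw [IsScalarTower.algebraMap_apply D F L, hd, hσ, ← map_mul, mul_comm]⟩
  have hconj : ∀ v ∈ I, ∀ w ∈ W, σ v * algebraMap F L w ∈ 1 / I := by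
    intro v hv w hw u hu
    refine mem_one.2 (hImul _ fun y hy => ?_)
    have := mem_of_forall_isMaximal_exists_smul_mem fun p _ =>
      exists_smul_mul_apply_mul_mul_mem h2 σ _ hI (hN w hw) p hy hv hu
    rwa [show σ v * algebraMap F L w * u * y = y * σ v * algebraMap F L w * u by ring]
  refine le_antisymm mul_one_div_le_one (one_le.2 ?_)
  have hle : span D (Algebra.norm F '' (I : Set L)) * W ≤
      ((I * (1 / I)).restrictScalars D).comap ((Algebra.linearMap F L).restrictScalars D) := by
    rw [← span_eq W, span_mul_span, span_le]
    rintro _ ⟨_, ⟨v, hv, rfl⟩, w, hw, rfl⟩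
    show algebraMap F L (Algebra.norm F v * w) ∈ I * (1 / I)
    rw [map_mul, ← hσ, mul_assoc]
    exact mul_mem_mul hv (hconj v hv w hw)
  have h1 := hle (hW ▸ one_le.1 le_rfl)
  rwa [mem_comap, LinearMap.restrictScalars_apply, Algebra.linearMap_apply, map_one] at h1

end Dedekind

theorem gorenstein_of_subalgebra_integralClosure_general
    (D F L : Type*) [CommRing D] [IsDedekindDomain D]
    [Field F] [Algebra D F] [IsFractionRing D F] [NumberField F]
    [Field L] [Algebra F L] [Algebra D L] [IsScalarTower D F L]
    (hquad : Module.finrank F L = 2)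
    (R : Subalgebra D L) (hR : R ≤ integralClosure D L) :
    IsGorensteinOrder ↥R L := by
  have : Algebra.IsQuadraticExtension F L := ⟨hquad⟩
  have : Module.Finite D R := Subalgebra.finite_of_le_integralClosure (F := F) hR
  obtain ⟨σ, hσ⟩ := exists_algEquiv_mul_apply_eq_norm F L hquad
  intro I hI hI0 hImul
  exact ⟨1 / I, mul_one_div_eq_one_of_finrank_le_two hquad.le σ.toLinearMap hσ hI.restrictScalars
    hI0 fun x hx => (hImul x).1 hx⟩

/-- Let `D` be a Dedekind domain with field of fractions `F`, a totally
real number field, and let `L` be a CM field with maximal totally real subfield `F`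
(i.e. `L/F` is a totally imaginary quadratic extension).  Any `D`-subalgebra `R` of the
integral closure of `D` in `L` with `R ⊗ ℚ = L` is a Gorenstein ring. -/
theorem gorenstein_of_subalgebra_integralClosure
    (D F L : Type*) [CommRing D] [IsDomain D] [IsDedekindDomain D]
    [Field F] [Algebra D F] [IsFractionRing D F] [NumberField F]
    (hF : IsTotallyRealField F)
    [Field L] [NumberField L] [Algebra F L] [Algebra D L] [IsScalarTower D F L]
    (hquad : Module.finrank F L = 2)
    (hL : IsTotallyImaginaryField L)
    (R : Subalgebra D L) (hR : R ≤ integralClosure D L)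
    (hRQ : Submodule.span ℚ (R : Set L) = ⊤) :
    IsGorensteinOrder ↥R L :=
  gorenstein_of_subalgebra_integralClosure_general D F L hquad R hR
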